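/- Let f : ℝ → [0,∞) be a probability density and let h(u) = (f(√u) + f(−√u))/(2√u) for u > 0, extended by 0 to u ≤ 0. Then for almost every r > 0, Z_N(f, √r) = 2 h^{*N}(r) / (|𝕊^{N−1}| r^{N/2 − 1}), where h^{*N} denotes the N-fold convolution of h with itself. -/

import Mathlib

open MeasureTheory Real Set

noncomputable section

/-- The normalized uniform probability measure on the sphere of radius `r` in `ℝ^N`,
realized as a measure on `EuclideanSpace ℝ (Fin N)` supported on the sphere. -/
def sphereUnif (N : ℕ) (r : ℝ) : Measure (EuclideanSpace ℝ (Fin N)) :=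
  Measure.map (fun x : Metric.sphere (0 : EuclideanSpace ℝ (Fin N)) 1 =>
      r • (x : EuclideanSpace ℝ (Fin N)))
    (((volume : Measure (EuclideanSpace ℝ (Fin N))).toSphere Set.univ)⁻¹ •
      (volume : Measure (EuclideanSpace ℝ (Fin N))).toSphere)

/-- The surface area `|𝕊^{N-1}|` of the unit sphere in `ℝ^N`. -/
def sphereArea (N : ℕ) : ℝ :=
  (((volume : Measure (EuclideanSpace ℝ (Fin N))).toSphere) Set.univ).toReal

/-- The normalization function `Z_N(f, r)`. -/
def Znorm (N : ℕ) (f : ℝ → ℝ) (r : ℝ) : ℝ :=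
  ∫ v, ∏ i, f (v i) ∂(sphereUnif N r)

/-- Convolution of two functions on `ℝ`. -/
def convR (f g : ℝ → ℝ) (x : ℝ) : ℝ := ∫ t, f t * g (x - t)

/-- The `N`-fold convolution `h^{*N}` (meaningful for `N ≥ 1`). -/
def nfoldConv (h : ℝ → ℝ) : ℕ → ℝ → ℝ
  | 0 => h
  | 1 => h
  | n + 2 => convR (nfoldConv h (n + 1)) h

/-! If `X₁, …, X_N` are independent with density `f`, then each `Xᵢ²` has density `h`, so
`‖X‖² = ∑ Xᵢ²` has density `h^{*N}`. Computing the density of `‖X‖²` in polar coordinates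
instead gives `r ↦ r^{N/2 - 1} / 2 · ∫_{𝕊^{N-1}} ∏ f(√r ωᵢ) dω`, and the last integral is
`|𝕊^{N-1}| Z_N(f, √r)`. Two densities of the same law agree almost everywhere.

Densities are handled as `ℝ≥0∞`-valued functions, identified by testing against measurable `g`;
since `h` has finite mass, its `ℝ≥0∞`-valued convolution powers are finite almost everywhere
and so agree with the Bochner integrals defining `nfoldConv`. -/

open scoped ENNReal

theorem lintegral_Ioi_eq_lintegral_Ioi_comp_sqrt (G : ℝ → ℝ≥0∞) :
    ∫⁻ x in Ioi 0, G x = ∫⁻ u in Ioi 0, ENNReal.ofReal (1 / (2 * √u)) * G √u := by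
  have himage : sqrt '' Ioi 0 = Ioi 0 := by
    refine Set.ext fun y => ⟨?_, fun hy => ⟨y ^ 2, mem_Ioi.2 (pow_pos hy 2), sqrt_sq hy.le⟩⟩
    rintro ⟨u, hu, rfl⟩
    exact sqrt_pos.2 hu
  have hinj : InjOn sqrt (Ioi 0) := fun a ha b hb hab => (sqrt_inj ha.le hb.le).1 hab
  rw [← himage, lintegral_image_eq_lintegral_abs_deriv_mul measurableSet_Ioi
    (fun u hu => (hasDerivAt_sqrt hu.ne').hasDerivWithinAt) hinj, himage]
  refine setLIntegral_congr_fun measurableSet_Ioi fun u hu => ?_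
  have : 0 < √u := sqrt_pos.2 hu
  rw [abs_of_pos (by positivity)]

theorem lintegral_Iio_eq_lintegral_Ioi_comp_neg (G : ℝ → ℝ≥0∞) :
    ∫⁻ x in Iio 0, G x = ∫⁻ x in Ioi 0, G (-x) := by
  have himage : Neg.neg '' Ioi (0 : ℝ) = Iio 0 := by simp
  rw [← himage, lintegral_image_eq_lintegral_abs_deriv_mul measurableSet_Ioi
    (fun x _ => (hasDerivAt_neg x).hasDerivWithinAt) neg_injective.injOn]
  simp

theorem lintegral_eq_lintegral_Ioi_comp_sqrt_add_neg {G : ℝ → ℝ≥0∞} (hG : Measurable G) :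
    ∫⁻ x, G x = ∫⁻ u in Ioi 0, ENNReal.ofReal (1 / (2 * √u)) * (G √u + G (-√u)) := by
  rw [← lintegral_add_compl G measurableSet_Ioi, compl_Ioi,
    setLIntegral_congr Iio_ae_eq_Iic.symm, lintegral_Iio_eq_lintegral_Ioi_comp_neg,
    lintegral_Ioi_eq_lintegral_Ioi_comp_sqrt G,
    lintegral_Ioi_eq_lintegral_Ioi_comp_sqrt (fun x => G (-x)),
    ← lintegral_add_left (by fun_prop)]
  simp only [mul_add]

section SqDensity

def sqDensity (f : ℝ → ℝ) (u : ℝ) : ℝ :=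
  if 0 < u then (f √u + f (-√u)) / (2 * √u) else 0

variable {f : ℝ → ℝ}

theorem measurable_sqDensity (hf : Measurable f) : Measurable (sqDensity f) :=
  Measurable.ite measurableSet_Ioi (by fun_prop) measurable_const

theorem sqDensity_nonneg (hf : ∀ v, 0 ≤ f v) (u : ℝ) : 0 ≤ sqDensity f u := by
  unfold sqDensity
  split_ifs
  exacts [div_nonneg (add_nonneg (hf _) (hf _)) (by positivity), le_rfl]

theorem lintegral_ofReal_mul_comp_sq (hf_meas : Measurable f) (hf_nonneg : ∀ v, 0 ≤ f v)
    {g : ℝ → ℝ≥0∞} (hg : Measurable g) :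
    ∫⁻ x, ENNReal.ofReal (f x) * g (x ^ 2) = ∫⁻ u, ENNReal.ofReal (sqDensity f u) * g u := by
  have hnonpos : ∫⁻ u in Iic 0, ENNReal.ofReal (sqDensity f u) * g u = 0 :=
    (setLIntegral_congr_fun measurableSet_Iic fun u (hu : u ≤ 0) => by
      rw [sqDensity, if_neg hu.not_gt, ENNReal.ofReal_zero, zero_mul]).trans lintegral_zero
  rw [lintegral_eq_lintegral_Ioi_comp_sqrt_add_neg (by fun_prop),
    ← lintegral_add_compl (fun u => ENNReal.ofReal (sqDensity f u) * g u) measurableSet_Ioi,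
    compl_Ioi, hnonpos, add_zero]
  refine setLIntegral_congr_fun measurableSet_Ioi fun u (hu : 0 < u) => ?_
  rw [sqDensity, if_pos hu, neg_sq, sq_sqrt hu.le, ← add_mul,
    ← ENNReal.ofReal_add (hf_nonneg _) (hf_nonneg _), ← mul_assoc,
    ← ENNReal.ofReal_mul (by positivity), one_div_mul_eq_div]

end SqDensity

section LConvolution

variable {M : Type*} [AddGroup M] [MeasurableSpace M] [MeasurableAdd₂ M] [MeasurableNeg M]
  {μ : Measure M} [SFinite μ] {A B : M → ℝ≥0∞}

theorem measurable_lconvolution_iterate (hA : Measurable A) (hB : Measurable B) (n : ℕ) :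
    Measurable ((· ⋆ₗ[μ] B)^[n] A) := by
  induction n with
  | zero => exact hA
  | succ n ih => rw [Function.iterate_succ_apply']; exact measurable_lconvolution μ ih hB

variable [μ.IsAddLeftInvariant]

theorem lintegral_lconvolution_mul (hA : Measurable A) (hB : Measurable B) {g : M → ℝ≥0∞}
    (hg : Measurable g) :
    ∫⁻ x, (A ⋆ₗ[μ] B) x * g x ∂μ = ∫⁻ a, A a * ∫⁻ b, B b * g (a + b) ∂μ ∂μ := by
  simp_rw [lconvolution_def]
  rw [lintegral_congr fun x => (lintegral_mul_const'' _ (by fun_prop)).symm,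
    lintegral_lintegral_swap (by fun_prop)]
  refine lintegral_congr fun a => ?_
  rw [← lintegral_const_mul'' _ (by fun_prop),
    ← lintegral_add_left_eq_self (fun x => A a * B (-a + x) * g x) a]
  simp only [neg_add_cancel_left, mul_assoc]

theorem lintegral_lconvolution (hA : Measurable A) (hB : Measurable B) :
    ∫⁻ x, (A ⋆ₗ[μ] B) x ∂μ = (∫⁻ x, A x ∂μ) * ∫⁻ x, B x ∂μ := by
  simpa [lintegral_mul_const _ hA] using lintegral_lconvolution_mul (μ := μ) hA hB measurable_one

theorem lintegral_lconvolution_iterate (hA : Measurable A) (hB : Measurable B) (n : ℕ) :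
    ∫⁻ x, ((· ⋆ₗ[μ] B)^[n] A) x ∂μ = (∫⁻ x, A x ∂μ) * (∫⁻ x, B x ∂μ) ^ n := by
  induction n with
  | zero => simp
  | succ n ih =>
    rw [Function.iterate_succ_apply', lintegral_lconvolution
      (measurable_lconvolution_iterate hA hB n) hB, ih, pow_succ, mul_assoc]

end LConvolution

section SumOfIndependent

variable {α M : Type*} [MeasurableSpace α] {μ : Measure α} [SigmaFinite μ]
  [AddCommGroup M] [MeasurableSpace M] [MeasurableAdd₂ M] [MeasurableNeg M]
  {ν : Measure M} [ν.IsAddLeftInvariant] [SFinite ν]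

theorem lintegral_pi_prod_mul_comp_sum {F : α → ℝ≥0∞} {φ : α → M} {G : M → ℝ≥0∞}
    (hF : Measurable F) (hφ : Measurable φ) (hG : Measurable G)
    (hpush : ∀ g : M → ℝ≥0∞, Measurable g → ∫⁻ x, F x * g (φ x) ∂μ = ∫⁻ u, G u * g u ∂ν)
    (n : ℕ) {g : M → ℝ≥0∞} (hg : Measurable g) :
    ∫⁻ w, (∏ i, F (w i)) * g (∑ i, φ (w i)) ∂(Measure.pi fun _ : Fin (n + 1) => μ)
      = ∫⁻ u, ((· ⋆ₗ[ν] G)^[n] G) u * g u ∂ν := by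
  induction n generalizing g with
  | zero =>
    rw [Function.iterate_zero_apply, ← hpush g hg,
      ← (measurePreserving_funUnique μ (Fin 1)).lintegral_comp_emb
        (MeasurableEquiv.measurableEmbedding _)]
    simp
    rfl
  | succ n ih =>
    rw [← (measurePreserving_piFinSuccAbove (fun _ : Fin (n + 2) => μ) (Fin.last _)).symm
      |>.lintegral_comp_emb (MeasurableEquiv.measurableEmbedding _),
      lintegral_prod_symm _ (by fun_prop)]
    simp only [MeasurableEquiv.piFinSuccAbove_symm_apply, Fin.insertNthEquiv, Equiv.coe_fn_mk,
      Fin.insertNth_last', Fin.prod_univ_castSucc (n := n + 1),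
      Fin.sum_univ_castSucc (n := n + 1), Fin.snoc_castSucc, Fin.snoc_last]
    have hlast (y : Fin (n + 1) → α) :
        ∫⁻ x, (∏ i, F (y i)) * F x * g (∑ i, φ (y i) + φ x) ∂μ
          = (∏ i, F (y i)) * ∫⁻ u, G u * g (∑ i, φ (y i) + u) ∂ν := by
      simp_rw [mul_assoc]
      rw [lintegral_const_mul _ (by fun_prop),
        hpush (fun u => g (∑ i, φ (y i) + u)) (by fun_prop)]
    simp_rw [hlast]
    rw [ih (g := fun s => ∫⁻ u, G u * g (s + u) ∂ν) (by fun_prop), Function.iterate_succ_apply',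
      lintegral_lconvolution_mul (measurable_lconvolution_iterate hG hG n) hG hg]

end SumOfIndependent

theorem nfoldConv_succ_ae_eq {h : ℝ → ℝ} (hm : Measurable h) (h_nonneg : ∀ x, 0 ≤ h x)
    (hfin : ∫⁻ x, ENNReal.ofReal (h x) ≠ ∞) (n : ℕ) :
    nfoldConv h (n + 1) =ᵐ[volume]
      fun x => (((· ⋆ₗ (ENNReal.ofReal ∘ h))^[n] (ENNReal.ofReal ∘ h)) x).toReal := by
  set G := ENNReal.ofReal ∘ h
  have hG : Measurable G := by fun_prop
  induction n with
  | zero => exact Filter.Eventually.of_forall fun x => (ENNReal.toReal_ofReal (h_nonneg x)).symm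
  | succ n ih =>
    have hP := measurable_lconvolution_iterate (μ := volume) hG hG n
    have hmass : ∫⁻ x, ((· ⋆ₗ G)^[n + 1] G) x ≠ ∞ := by
      rw [lintegral_lconvolution_iterate hG hG]
      exact ENNReal.mul_ne_top hfin (ENNReal.pow_ne_top hfin)
    filter_upwards [ae_lt_top (measurable_lconvolution_iterate hG hG (n + 1)) hmass] with x hx
    rw [Function.iterate_succ_apply', lconvolution_def] at hx ⊢
    rw [← integral_toReal (by fun_prop) (ae_lt_top (by fun_prop) hx.ne)]
    refine integral_congr_ae ?_
    filter_upwards [ih] with t ht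
    simp [ht, G, h_nonneg, neg_add_eq_sub]

section Polar

variable {E : Type*} [NormedAddCommGroup E] [NormedSpace ℝ E] [FiniteDimensional ℝ E]
  [MeasurableSpace E] [BorelSpace E] (μ : Measure E) [μ.IsAddHaarMeasure]

theorem lintegral_eq_lintegral_Ioi_toSphere [Nontrivial E] {Φ : E → ℝ≥0∞} (hΦ : Measurable Φ) :
    ∫⁻ v, Φ v ∂μ = ∫⁻ y in Ioi 0,
      ENNReal.ofReal (y ^ (Module.finrank ℝ E - 1)) * ∫⁻ ω, Φ (y • (ω : E)) ∂μ.toSphere := by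
  set e := homeomorphUnitSphereProd E
  have hpunctured : ∫⁻ v, Φ v ∂μ = ∫⁻ x : ({0}ᶜ : Set E), Φ x ∂μ.comap Subtype.val := by
    rw [lintegral_subtype_comap (measurableSet_singleton _).compl, restrict_compl_singleton]
  have hpolar : ∫⁻ x : ({0}ᶜ : Set E), Φ x ∂μ.comap Subtype.val
      = ∫⁻ x, Φ ((e x).2.1 • ((e x).1 : E)) ∂μ.comap Subtype.val :=
    lintegral_congr fun x => by
      rw [← homeomorphUnitSphereProd_symm_apply_coe, Homeomorph.symm_apply_apply]
  rw [hpunctured, hpolar,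
    (Measure.measurePreserving_homeomorphUnitSphereProd μ).lintegral_comp_emb
      e.measurableEmbedding (fun p => Φ (p.2.1 • (p.1 : E))),
    lintegral_prod_symm _ (by fun_prop), Measure.volumeIoiPow,
    lintegral_withDensity_eq_lintegral_mul _ (by fun_prop) (by fun_prop)]
  exact lintegral_subtype_comap measurableSet_Ioi
    fun y => ENNReal.ofReal (y ^ _) * ∫⁻ ω, Φ (y • (ω : E)) ∂μ.toSphere

def normSqDensity (Φ : E → ℝ≥0∞) : ℝ → ℝ≥0∞ :=
  (Ioi 0).indicator fun r => ENNReal.ofReal (√r ^ (Module.finrank ℝ E - 1) / (2 * √r)) *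
    ∫⁻ ω, Φ (√r • (ω : E)) ∂μ.toSphere

theorem measurable_normSqDensity {Φ : E → ℝ≥0∞} (hΦ : Measurable Φ) :
    Measurable (normSqDensity μ Φ) :=
  Measurable.indicator (by fun_prop) measurableSet_Ioi

theorem lintegral_mul_comp_norm_sq [Nontrivial E] {Φ : E → ℝ≥0∞} (hΦ : Measurable Φ)
    {g : ℝ → ℝ≥0∞} (hg : Measurable g) :
    ∫⁻ v, Φ v * g (‖v‖ ^ 2) ∂μ = ∫⁻ r, normSqDensity μ Φ r * g r := by
  rw [lintegral_eq_lintegral_Ioi_toSphere μ (by fun_prop),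
    lintegral_Ioi_eq_lintegral_Ioi_comp_sqrt]
  simp_rw [normSqDensity, ← indicator_mul_left]
  rw [lintegral_indicator measurableSet_Ioi]
  refine setLIntegral_congr_fun measurableSet_Ioi fun r hr => ?_
  have hnorm (ω : Metric.sphere (0 : E) 1) : ‖√r • (ω : E)‖ ^ 2 = r := by
    rw [norm_smul, norm_of_nonneg (sqrt_nonneg r), norm_eq_of_mem_sphere ω, mul_one,
      sq_sqrt (le_of_lt hr)]
  simp_rw [hnorm]
  rw [lintegral_mul_const _ (by fun_prop), ← mul_assoc, ← mul_assoc,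
    ← ENNReal.ofReal_mul (by positivity), one_div, inv_mul_eq_div]

end Polar

theorem lintegral_euclideanSpace_prod_mul_comp_norm_sq {ι : Type*} [Fintype ι]
    (F g : ℝ → ℝ≥0∞) :
    ∫⁻ v : EuclideanSpace ℝ ι, (∏ i, F (v i)) * g (‖v‖ ^ 2)
      = ∫⁻ w : ι → ℝ, (∏ i, F (w i)) * g (∑ i, w i ^ 2) := by
  rw [← (PiLp.volume_preserving_toLp ι).lintegral_comp_emb
    (MeasurableEquiv.toLp 2 (ι → ℝ)).measurableEmbedding]
  simp [EuclideanSpace.norm_sq_eq]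

theorem ae_eq_of_forall_lintegral_mul_eq {α : Type*} [MeasurableSpace α] {μ : Measure α}
    [SigmaFinite μ] {A B : α → ℝ≥0∞} (hA : Measurable A) (hB : Measurable B)
    (hAB : ∀ g : α → ℝ≥0∞, Measurable g → ∫⁻ x, A x * g x ∂μ = ∫⁻ x, B x * g x ∂μ) :
    A =ᵐ[μ] B := by
  refine (withDensity_eq_iff_of_sigmaFinite hA.aemeasurable hB.aemeasurable).1 <|
    Measure.ext_of_lintegral _ fun g hg => ?_
  rw [lintegral_withDensity_eq_lintegral_mul _ hA hg,
    lintegral_withDensity_eq_lintegral_mul _ hB hg]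
  exact hAB g hg

theorem lintegral_ofReal_eq_one {f : ℝ → ℝ} (hf_nonneg : ∀ v, 0 ≤ f v)
    (hf_prob : ∫ v, f v = 1) : ∫⁻ v, ENNReal.ofReal (f v) = 1 := by
  have hf_int : Integrable f := by
    by_contra hf_int
    simp [integral_undef hf_int] at hf_prob
  rw [← ofReal_integral_eq_lintegral_ofReal hf_int (ae_of_all _ hf_nonneg), hf_prob,
    ENNReal.ofReal_one]

theorem Znorm_eq_lintegral_toSphere_div {N : ℕ} {f : ℝ → ℝ} (hf_meas : Measurable f)
    (hf_nonneg : ∀ v, 0 ≤ f v) (r : ℝ) :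
    Znorm N f r = (∫⁻ ω, ∏ i, ENNReal.ofReal (f ((r • (ω : EuclideanSpace ℝ (Fin N))) i))
      ∂(volume : Measure (EuclideanSpace ℝ (Fin N))).toSphere).toReal / sphereArea N := by
  rw [Znorm, sphereUnif,
    integral_map (by fun_prop) (Measurable.aestronglyMeasurable (by fun_prop)),
    integral_smul_measure, integral_eq_lintegral_of_nonneg_ae
      (ae_of_all _ fun ω => Finset.prod_nonneg fun i _ => hf_nonneg _)
      (Measurable.aestronglyMeasurable (by fun_prop))]
  simp_rw [ENNReal.ofReal_prod_of_nonneg fun i _ => hf_nonneg _]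
  rw [ENNReal.toReal_inv, smul_eq_mul, inv_mul_eq_div, sphereArea]

theorem two_mul_sqrt_pow_div {r : ℝ} (hr : 0 < r) (n : ℕ) :
    2 * (√r ^ n / (2 * √r)) = r ^ (((n + 1 : ℕ) : ℝ) / 2 - 1) := by
  rw [← mul_div_assoc, mul_div_mul_left _ _ two_ne_zero, sqrt_eq_rpow, ← rpow_natCast,
    ← rpow_mul hr.le, ← rpow_sub hr]
  push_cast
  ring_nf

theorem Znorm_eq_nfoldConv
    (f : ℝ → ℝ) (hf_meas : Measurable f) (hf_nonneg : ∀ v, 0 ≤ f v)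
    (hf_prob : ∫ v, f v = 1)
    (N : ℕ) (hN : 1 ≤ N)
    (h : ℝ → ℝ)
    (hh : ∀ u : ℝ, h u =
      if 0 < u then (f (Real.sqrt u) + f (-Real.sqrt u)) / (2 * Real.sqrt u) else 0) :
    ∀ᵐ r ∂(volume.restrict (Ioi (0 : ℝ))),
      Znorm N f (Real.sqrt r)
        = 2 * nfoldConv h N r / (sphereArea N * r ^ ((N : ℝ) / 2 - 1)) := by
  obtain ⟨n, rfl⟩ : ∃ n, N = n + 1 := ⟨N - 1, by omega⟩
  obtain rfl : h = sqDensity f := funext hh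
  have hpush (g : ℝ → ℝ≥0∞) (hg : Measurable g) :=
    lintegral_ofReal_mul_comp_sq hf_meas hf_nonneg hg
  have hmass : ∫⁻ u, ENNReal.ofReal (sqDensity f u) = 1 := by
    simpa [lintegral_ofReal_eq_one hf_nonneg hf_prob] using (hpush 1 measurable_one).symm
  have hh_meas := measurable_sqDensity hf_meas
  have hdensity : normSqDensity volume (fun v : EuclideanSpace ℝ (Fin (n + 1)) =>
      ∏ i, ENNReal.ofReal (f (v i))) =ᵐ[volume]
        (· ⋆ₗ (ENNReal.ofReal ∘ sqDensity f))^[n] (ENNReal.ofReal ∘ sqDensity f) := by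
    refine ae_eq_of_forall_lintegral_mul_eq (measurable_normSqDensity _ (by fun_prop))
      (measurable_lconvolution_iterate (by fun_prop) (by fun_prop) n) fun g hg => ?_
    rw [← lintegral_mul_comp_norm_sq _ (by fun_prop) hg,
      lintegral_euclideanSpace_prod_mul_comp_norm_sq (fun x => ENNReal.ofReal (f x)), volume_pi,
      lintegral_pi_prod_mul_comp_sum (by fun_prop) (by fun_prop) (by fun_prop) hpush n hg]
    rfl
  have hconv := nfoldConv_succ_ae_eq hh_meas (sqDensity_nonneg hf_nonneg) (by simp [hmass]) n
  filter_upwards [ae_restrict_of_ae hdensity, ae_restrict_of_ae hconv,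
      ae_restrict_mem measurableSet_Ioi]
    with r hr_density hr_conv hr
  rw [Znorm_eq_lintegral_toSphere_div hf_meas hf_nonneg, hr_conv, ← hr_density, normSqDensity,
    indicator_of_mem hr, ENNReal.toReal_mul, ENNReal.toReal_ofReal (by positivity),
    finrank_euclideanSpace_fin, Nat.add_sub_cancel, ← mul_assoc, two_mul_sqrt_pow_div hr,
    mul_comm (sphereArea _), mul_div_mul_left _ _ (rpow_pos_of_pos hr _).ne']

end
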